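/- Let α, β, m be natural numbers with β ≤ m, and let u, v, w, z be α×α complex matrices such that the 2α×2α block matrix fromBlocks u v w z is unitary. Let I be the index type (Fin α ⊕ Fin m) ⊕ (Fin m ⊕ Fin α) and let U be the I×I complex matrix given in 4×4 block form with respect to the partition of sizes (α, m, m, α) by [[u, 0, 0, v], [0, 0, 1_m, 0], [0, 1_m, 0, 0], [w, 0, 0, z]]. Let A and B be Hermitian (α+β)×(α+β) complex matrices (indexed by Fin α ⊕ Fin β), let ι : Fin α ⊕ Fin β → I be the embedding sending the Fin α part to the first group of the partition and the Fin β part to the first β coordinates of the second group (via β ≤ m), and let Ã, B̃ be the I×I matrices with Ã(ι i, ι j) = A(i, j), B̃(ι i, ι j) = B(i, j), and all other entries zero. Let S be the (α+β)×(α+β) matrix fromBlocks u 0 0 0, set X = Ã + U·B̃·Uᴴ and M = (fromBlocks A 0 0 B)·(fromBlocks 1 S Sᴴ 1). Let γ₁, γ₂ be real numbers and λ : ℕ → ℝ a sequence with ∑_k λ_k² < ∞. Then exp(-(γ₁/2)·tr(X²) + i·γ₂·tr X) · ∏_{k=0}^∞ exp(-i·λ_k·tr X)·(det(1 - i·λ_k·X))⁻¹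 = exp(-(γ₁/2)·tr(M²) + i·γ₂·(tr A + tr B)) · ∏_{k=0}^∞ exp(-i·λ_k·(tr A + tr B))·(det(1 - i·λ_k·M))⁻¹; in particular the left-hand side does not depend on m. -/

import Mathlib

/-!
Let `E` be the isometry onto the coordinates picked out by `emb`, `F = [E | U E]` and
`D = diag(A, B)`. Then `X = F D Fᴴ`, while `Uᴴ U = 1` and `Eᴴ U E = S` give
`Fᴴ F = [[1, S], [Sᴴ, 1]]`, so `M = D Fᴴ F`. Hence `X = F N` and `M = N F` with `N = D Fᴴ`,
and both sides only involve `tr`, `tr (·²)` and `det (1 - c ·)`, which are invariant under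
`F N ↦ N F` (the last one by Sylvester's determinant identity).
-/

open Matrix

/-- The big `(α + m + m + α) × (α + m + m + α)` block matrix
`[[u, 0, 0, v], [0, 0, 1, 0], [0, 1, 0, 0], [w, 0, 0, z]]`. -/
noncomputable def bigU (α m : ℕ) (u v w z : Matrix (Fin α) (Fin α) ℂ) :
    Matrix ((Fin α ⊕ Fin m) ⊕ (Fin m ⊕ Fin α)) ((Fin α ⊕ Fin m) ⊕ (Fin m ⊕ Fin α)) ℂ :=
  Matrix.fromBlocks
    (Matrix.fromBlocks u 0 0 0)
    (Matrix.fromBlocks 0 v (1 : Matrix (Fin m) (Fin m) ℂ) 0)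
    (Matrix.fromBlocks 0 (1 : Matrix (Fin m) (Fin m) ℂ) w 0)
    (Matrix.fromBlocks 0 0 0 z)

/-- The embedding of indices `Fin α ⊕ Fin β` into `(Fin α ⊕ Fin m) ⊕ (Fin m ⊕ Fin α)`,
sending the `Fin α` part to the first group and the `Fin β` part to the first `β`
coordinates of the second group. -/
def emb (α β m : ℕ) (hβ : β ≤ m) :
    Fin α ⊕ Fin β → (Fin α ⊕ Fin m) ⊕ (Fin m ⊕ Fin α) :=
  Sum.elim (fun i => Sum.inl (Sum.inl i)) (fun j => Sum.inr (Sum.inl (Fin.castLE hβ j)))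

namespace Matrix

variable {R l m n : Type*}

theorem trace_fromBlocks [AddCommMonoid R] [Fintype m] [Fintype n] (A : Matrix m m R)
    (B : Matrix m n R) (C : Matrix n m R) (D : Matrix n n R) :
    (fromBlocks A B C D).trace = A.trace + D.trace := by
  simp [trace, Fintype.sum_sum_type]

section StarRing

variable [Semiring R] [StarRing R]

theorem conjTranspose_fromCols_mul_fromCols [Fintype l] (P : Matrix l m R) (Q : Matrix l n R) :
    (fromCols P Q)ᴴ * fromCols P Q = fromBlocks (Pᴴ * P) (Pᴴ * Q) (Qᴴ * P) (Qᴴ * Q) := by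
  rw [conjTranspose_fromCols_eq_fromRows_conjTranspose, fromRows_mul_fromCols]

theorem fromCols_mul_fromBlocks_zero_mul_conjTranspose [Fintype m] [Fintype n]
    (P : Matrix l m R) (Q : Matrix l n R) (A : Matrix m m R) (B : Matrix n n R) :
    fromCols P Q * fromBlocks A 0 0 B * (fromCols P Q)ᴴ = P * A * Pᴴ + Q * B * Qᴴ := by
  rw [conjTranspose_fromCols_eq_fromRows_conjTranspose, fromCols_mul_fromBlocks,
    fromCols_mul_fromRows]
  simp

variable [DecidableEq m]

theorem eq_one_submatrix_mul_mul_conjTranspose [Fintype n] {ι : n → m}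
    (hι : Function.Injective ι) {T : Matrix m m R} {A : Matrix n n R}
    (hT : ∀ i j, T (ι i) (ι j) = A i j)
    (hT0 : ∀ p q, (p ∉ Set.range ι ∨ q ∉ Set.range ι) → T p q = 0) :
    T = (1 : Matrix m m R).submatrix id ι * A * ((1 : Matrix m m R).submatrix id ι)ᴴ := by
  classical
  have hE : ∀ p q,
      ((1 : Matrix m m R).submatrix id ι * A * ((1 : Matrix m m R).submatrix id ι)ᴴ) p q =
        ∑ i, ∑ j, (if p = ι i then 1 else 0) * A i j * (if q = ι j then 1 else 0) := by
    intro p q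
    simp only [mul_apply, Finset.sum_mul]
    rw [Finset.sum_comm]
    simp [one_apply, apply_ite star]
  ext p q
  rw [hE]
  by_cases hp : p ∈ Set.range ι
  · obtain ⟨i, rfl⟩ := hp
    by_cases hq : q ∈ Set.range ι
    · obtain ⟨j, rfl⟩ := hq
      simp [hι.eq_iff, hT]
    · rw [hT0 _ _ (Or.inr hq)]
      simp_all [eq_comm]
  · rw [hT0 _ _ (Or.inl hp)]
    simp_all [eq_comm]

variable [Fintype m]

theorem one_submatrix_conjTranspose_mul_mul (ι : n → m) (T : Matrix m m R) :
    ((1 : Matrix m m R).submatrix id ι)ᴴ * T * (1 : Matrix m m R).submatrix id ι =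
      T.submatrix ι ι := by
  ext i j
  simp [mul_apply, one_apply]

-- The witnesses are `F = [E | U E]` and `N = diag(A, B) Fᴴ`, where `E = 1.submatrix id ι`.
theorem exists_mul_eq_add_conj_and_mul_eq_fromBlocks_mul [Fintype n] [DecidableEq n]
    {U : Matrix m m R} (hU : Uᴴ * U = 1) {ι : n → m} (hι : Function.Injective ι)
    (A B : Matrix n n R) :
    ∃ (F : Matrix m (n ⊕ n) R) (N : Matrix (n ⊕ n) m R),
      (1 : Matrix m m R).submatrix id ι * A * ((1 : Matrix m m R).submatrix id ι)ᴴ +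
          U * ((1 : Matrix m m R).submatrix id ι * B * ((1 : Matrix m m R).submatrix id ι)ᴴ) *
            Uᴴ = F * N ∧
        fromBlocks A 0 0 B * fromBlocks 1 (U.submatrix ι ι) (U.submatrix ι ι)ᴴ 1 = N * F := by
  set E := (1 : Matrix m m R).submatrix id ι
  set F := fromCols E (U * E)
  refine ⟨F, fromBlocks A 0 0 B * Fᴴ, ?_, ?_⟩
  · rw [← Matrix.mul_assoc F, fromCols_mul_fromBlocks_zero_mul_conjTranspose, conjTranspose_mul]
    simp only [Matrix.mul_assoc]
  · have hEE : Eᴴ * E = 1 := by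
      rw [← Matrix.mul_one Eᴴ, one_submatrix_conjTranspose_mul_mul, submatrix_one ι hι]
    have hEUE : Eᴴ * (U * E) = U.submatrix ι ι := by
      rw [← Matrix.mul_assoc, one_submatrix_conjTranspose_mul_mul]
    have hUEE : (U * E)ᴴ * E = (U.submatrix ι ι)ᴴ := by
      rw [conjTranspose_mul, one_submatrix_conjTranspose_mul_mul, conjTranspose_submatrix]
    have hUEUE : (U * E)ᴴ * (U * E) = 1 := by
      rw [conjTranspose_mul, Matrix.mul_assoc, ← Matrix.mul_assoc Uᴴ, hU, Matrix.one_mul, hEE]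
    rw [Matrix.mul_assoc, conjTranspose_fromCols_mul_fromCols, hEE, hEUE, hUEE, hUEUE]

end StarRing

section CyclicPermutation

variable [CommRing R] [Fintype m] [Fintype n] [DecidableEq m] [DecidableEq n]

theorem trace_sq_mul_comm (F : Matrix m n R) (N : Matrix n m R) :
    ((F * N) ^ 2).trace = ((N * F) ^ 2).trace := by
  rw [sq, sq, Matrix.mul_assoc, trace_mul_comm]
  simp only [Matrix.mul_assoc]

theorem det_one_sub_smul_mul_comm (c : R) (F : Matrix m n R) (N : Matrix n m R) :
    (1 - c • (F * N)).det = (1 - c • (N * F)).det := by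
  rw [← Matrix.mul_smul, det_one_sub_mul_comm, Matrix.smul_mul]

end CyclicPermutation

end Matrix

noncomputable def fullCharFun {I : Type*} [Fintype I] [DecidableEq I] (γ₁ γ₂ : ℝ)
    (lam : ℕ → ℝ) (X : Matrix I I ℂ) : ℂ :=
  Complex.exp (-((γ₁ : ℂ) / 2) * (X ^ 2).trace + Complex.I * (γ₂ : ℂ) * X.trace) *
    ∏' k : ℕ, Complex.exp (-Complex.I * (lam k : ℂ) * X.trace) *
      ((1 - (Complex.I * (lam k : ℂ)) • X).det)⁻¹

theorem fullCharFun_mul_comm {I n : Type*} [Fintype I] [DecidableEq I] [Fintype n]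
    [DecidableEq n] (γ₁ γ₂ : ℝ) (lam : ℕ → ℝ) (F : Matrix I n ℂ) (N : Matrix n I ℂ) :
    fullCharFun γ₁ γ₂ lam (F * N) = fullCharFun γ₁ γ₂ lam (N * F) := by
  simp only [fullCharFun, trace_sq_mul_comm F N, trace_mul_comm F N,
    det_one_sub_smul_mul_comm _ F N]

theorem emb_injective {α β m : ℕ} (hβ : β ≤ m) : Function.Injective (emb α β m hβ) := by
  rintro (i | i) (j | j) h <;> simp_all [emb, Fin.castLE_inj]

theorem bigU_submatrix_emb {α β m : ℕ} (hβ : β ≤ m) (u v w z : Matrix (Fin α) (Fin α) ℂ) :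
    (bigU α m u v w z).submatrix (emb α β m hβ) (emb α β m hβ) = fromBlocks u 0 0 0 := by
  ext (i | i) (j | j) <;> simp [bigU, emb]

theorem bigU_conjTranspose_mul_self {α : ℕ} (m : ℕ) {u v w z : Matrix (Fin α) (Fin α) ℂ}
    (h : fromBlocks u v w z ∈ unitaryGroup (Fin α ⊕ Fin α) ℂ) :
    (bigU α m u v w z)ᴴ * bigU α m u v w z = 1 := by
  have h' := mem_unitaryGroup_iff'.mp h
  rw [star_eq_conjTranspose, fromBlocks_conjTranspose, fromBlocks_multiply,
    ← fromBlocks_one] at h'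
  obtain ⟨huu, huv, hvu, hvv⟩ := fromBlocks_inj.mp h'
  simp only [bigU, fromBlocks_conjTranspose, fromBlocks_multiply, fromBlocks_add,
    conjTranspose_zero, conjTranspose_one, Matrix.mul_zero, Matrix.zero_mul, Matrix.mul_one,
    add_zero, zero_add, huu, huv, hvu, hvv, fromBlocks_zero, fromBlocks_one]

theorem charFun_eq_of_corner_general (α β m : ℕ) (hβ : β ≤ m)
    (u v w z : Matrix (Fin α) (Fin α) ℂ)
    (huvwz : Matrix.fromBlocks u v w z ∈ Matrix.unitaryGroup (Fin α ⊕ Fin α) ℂ)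
    (A B : Matrix (Fin α ⊕ Fin β) (Fin α ⊕ Fin β) ℂ)
    (Atil Btil : Matrix ((Fin α ⊕ Fin m) ⊕ (Fin m ⊕ Fin α))
      ((Fin α ⊕ Fin m) ⊕ (Fin m ⊕ Fin α)) ℂ)
    (hAtil : ∀ i j, Atil (emb α β m hβ i) (emb α β m hβ j) = A i j)
    (hAtil0 : ∀ p q, (p ∉ Set.range (emb α β m hβ) ∨ q ∉ Set.range (emb α β m hβ)) →
      Atil p q = 0)
    (hBtil : ∀ i j, Btil (emb α β m hβ i) (emb α β m hβ j) = B i j)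
    (hBtil0 : ∀ p q, (p ∉ Set.range (emb α β m hβ) ∨ q ∉ Set.range (emb α β m hβ)) →
      Btil p q = 0)
    (S : Matrix (Fin α ⊕ Fin β) (Fin α ⊕ Fin β) ℂ)
    (hS : S = Matrix.fromBlocks u 0 0 0)
    (X : Matrix ((Fin α ⊕ Fin m) ⊕ (Fin m ⊕ Fin α))
      ((Fin α ⊕ Fin m) ⊕ (Fin m ⊕ Fin α)) ℂ)
    (hX : X = Atil + bigU α m u v w z * Btil * (bigU α m u v w z)ᴴ)
    (M : Matrix ((Fin α ⊕ Fin β) ⊕ (Fin α ⊕ Fin β)) ((Fin α ⊕ Fin β) ⊕ (Fin α ⊕ Fin β)) ℂ)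
    (hM : M = Matrix.fromBlocks A 0 0 B * Matrix.fromBlocks 1 S Sᴴ 1)
    (γ₁ γ₂ : ℝ) (lam : ℕ → ℝ) :
    Complex.exp (-((γ₁ : ℂ) / 2) * (X ^ 2).trace + Complex.I * (γ₂ : ℂ) * X.trace) *
        ∏' k : ℕ, Complex.exp (-Complex.I * (lam k : ℂ) * X.trace) *
          ((1 - (Complex.I * (lam k : ℂ)) • X).det)⁻¹
      = Complex.exp (-((γ₁ : ℂ) / 2) * (M ^ 2).trace +
            Complex.I * (γ₂ : ℂ) * (A.trace + B.trace)) *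
          ∏' k : ℕ, Complex.exp (-Complex.I * (lam k : ℂ) * (A.trace + B.trace)) *
            ((1 - (Complex.I * (lam k : ℂ)) • M).det)⁻¹ := by
  have hι := emb_injective (α := α) hβ
  obtain ⟨F, N, hFN, hNF⟩ := exists_mul_eq_add_conj_and_mul_eq_fromBlocks_mul
    (bigU_conjTranspose_mul_self m huvwz) hι A B
  rw [← eq_one_submatrix_mul_mul_conjTranspose hι hAtil hAtil0,
    ← eq_one_submatrix_mul_mul_conjTranspose hι hBtil hBtil0, ← hX] at hFN
  rw [bigU_submatrix_emb, ← hS, ← hM] at hNF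
  have htrM : M.trace = A.trace + B.trace := by
    rw [hM, fromBlocks_multiply, trace_fromBlocks]
    simp
  rw [← htrM]
  change fullCharFun γ₁ γ₂ lam X = fullCharFun γ₁ γ₂ lam M
  rw [hFN, hNF, fullCharFun_mul_comm]

/-- The full characteristic function of the polymorphism `π_{U_m}` depends only on
the corner `S` of the unitary matrix, not on `m`. -/
theorem charFun_eq_of_corner (α β m : ℕ) (hβ : β ≤ m)
    (u v w z : Matrix (Fin α) (Fin α) ℂ)
    (huvwz : Matrix.fromBlocks u v w z ∈ Matrix.unitaryGroup (Fin α ⊕ Fin α) ℂ)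
    (A B : Matrix (Fin α ⊕ Fin β) (Fin α ⊕ Fin β) ℂ)
    (hA : A.IsHermitian) (hB : B.IsHermitian)
    (Atil Btil : Matrix ((Fin α ⊕ Fin m) ⊕ (Fin m ⊕ Fin α))
      ((Fin α ⊕ Fin m) ⊕ (Fin m ⊕ Fin α)) ℂ)
    (hAtil : ∀ i j, Atil (emb α β m hβ i) (emb α β m hβ j) = A i j)
    (hAtil0 : ∀ p q, (p ∉ Set.range (emb α β m hβ) ∨ q ∉ Set.range (emb α β m hβ)) →
      Atil p q = 0)
    (hBtil : ∀ i j, Btil (emb α β m hβ i) (emb α β m hβ j) = B i j)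
    (hBtil0 : ∀ p q, (p ∉ Set.range (emb α β m hβ) ∨ q ∉ Set.range (emb α β m hβ)) →
      Btil p q = 0)
    (S : Matrix (Fin α ⊕ Fin β) (Fin α ⊕ Fin β) ℂ)
    (hS : S = Matrix.fromBlocks u 0 0 0)
    (X : Matrix ((Fin α ⊕ Fin m) ⊕ (Fin m ⊕ Fin α))
      ((Fin α ⊕ Fin m) ⊕ (Fin m ⊕ Fin α)) ℂ)
    (hX : X = Atil + bigU α m u v w z * Btil * (bigU α m u v w z)ᴴ)
    (M : Matrix ((Fin α ⊕ Fin β) ⊕ (Fin α ⊕ Fin β)) ((Fin α ⊕ Fin β) ⊕ (Fin α ⊕ Fin β)) ℂ)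
    (hM : M = Matrix.fromBlocks A 0 0 B * Matrix.fromBlocks 1 S Sᴴ 1)
    (γ₁ γ₂ : ℝ) (lam : ℕ → ℝ) (hlam : Summable (fun k => lam k ^ 2)) :
    Complex.exp (-((γ₁ : ℂ) / 2) * (X ^ 2).trace + Complex.I * (γ₂ : ℂ) * X.trace) *
        ∏' k : ℕ, Complex.exp (-Complex.I * (lam k : ℂ) * X.trace) *
          ((1 - (Complex.I * (lam k : ℂ)) • X).det)⁻¹
      = Complex.exp (-((γ₁ : ℂ) / 2) * (M ^ 2).trace +
            Complex.I * (γ₂ : ℂ) * (A.trace + B.trace)) *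
          ∏' k : ℕ, Complex.exp (-Complex.I * (lam k : ℂ) * (A.trace + B.trace)) *
            ((1 - (Complex.I * (lam k : ℂ)) • M).det)⁻¹ :=
  charFun_eq_of_corner_general α β m hβ u v w z huvwz A B Atil Btil hAtil hAtil0 hBtil hBtil0 S hS X
    hX M hM γ₁ γ₂ lam
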